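/- arXiv:2404.09437 — 12 statements merged into one kernel-verified Lean document; each statement's English description precedes it below -/
import Mathlib

section
/- For binary variables x_i, x_j ∈ {0,1} and real variables y_ij, y_ji ≥ 0, if x_i + x_j - y_ij ≤ 1, x_i + x_j - y_ji ≤ 1, y_ij + y_ji - 2x_i ≤ 0, and y_ji + y_ij - 2x_j ≤ 0, then y_ij = y_ji = x_i * x_j. -/
theorem pk_linearization (xi xj yij yji : ℝ)
    (hxi : xi = 0 ∨ xi = 1) (hxj : xj = 0 ∨ xj = 1)
    (hyij : 0 ≤ yij) (hyji : 0 ≤ yji)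
    (h1 : xi + xj - yij ≤ 1) (h1' : xi + xj - yji ≤ 1)
    (h2 : yij + yji - 2 * xi ≤ 0) (h2' : yji + yij - 2 * xj ≤ 0) :
    yij = xi * xj ∧ yji = xi * xj := by
  rcases hxi with h | h <;> rcases hxj with h' | h' <;> subst h <;> subst h' <;>
    constructor <;> linarith
end

section
/- Let n ∈ ℕ, let R : Fin n → Finset (Fin n) be a symmetric relation (j ∈ R i ↔ i ∈ R j, and i ∉ R i), let x : Fin n → {0,1} (binary) and y : Fin n → Fin n → {0,1} (binary). Let α : Fin n → Fin n → ℝ with α i j > 0 for all j ∈ R i. Suppose for all i and all j ∈ R i: 2·y i j ≤ x i + x j, and for all i: ∑_{j ∈ R i} α i j · (x j - y i j) ≤ (∑_{j ∈ R i} α i j) · (1 - x i). Then for all i and j ∈ R i, y i j = x i · x j. -/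
theorem DW_alpha_valid (n : ℕ) (R : Fin n → Finset (Fin n))
    (hsym : ∀ i j, j ∈ R i ↔ i ∈ R j) (hirr : ∀ i, i ∉ R i)
    (x : Fin n → ℝ) (hx : ∀ i, x i = 0 ∨ x i = 1)
    (y : Fin n → Fin n → ℝ) (hy : ∀ i j, y i j = 0 ∨ y i j = 1)
    (α : Fin n → Fin n → ℝ) (hα : ∀ i, ∀ j ∈ R i, 0 < α i j)
    (h1 : ∀ i, ∀ j ∈ R i, 2 * y i j ≤ x i + x j)
    (h2 : ∀ i, ∑ j ∈ R i, α i j * (x j - y i j) ≤ (∑ j ∈ R i, α i j) * (1 - x i)) :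
    ∀ i, ∀ j ∈ R i, y i j = x i * x j := by
  have hy0 : ∀ i, ∀ j ∈ R i, x i + x j ≤ 1 → y i j = 0 := by
    intro i j hj hle
    rcases hy i j with h | h
    · exact h
    · exfalso; have := h1 i j hj; rw [h] at this; linarith
  intro i j hj
  rcases hx i with hi | hi
  · rw [hi, zero_mul]
    apply hy0 i j hj
    rcases hx j with h | h <;> rw [hi, h] <;> norm_num
  · rcases hx j with hjx | hjx
    · rw [hjx, mul_zero]
      apply hy0 i j hj
      rw [hi, hjx]; norm_num
    · rw [hi, hjx, one_mul]
      have hs := h2 i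
      rw [hi] at hs
      norm_num at hs
      have hnn : ∀ k ∈ R i, 0 ≤ α i k * (x k - y i k) := by
        intro k hk
        apply mul_nonneg (le_of_lt (hα i k hk))
        rcases hx k with h | h
        · have h0 : y i k = 0 := hy0 i k hk (by rw [hi, h]; norm_num)
          rw [h0, h]; norm_num
        · rcases hy i k with h' | h' <;> rw [h, h'] <;> norm_num
      have hsum0 : ∑ k ∈ R i, α i k * (x k - y i k) = 0 :=
        le_antisymm hs (Finset.sum_nonneg hnn)
      have hz := (Finset.sum_eq_zero_iff_of_nonneg hnn).mp hsum0 j hj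
      have hαj := hα i j hj
      rcases mul_eq_zero.mp hz with h | h
      · linarith
      · linarith
end

section
/- Let n ∈ ℕ, R : Fin n → Finset (Fin n) symmetric with i ∉ R i, x : Fin n → {0,1} binary, y : Fin n → Fin n → ℝ with 0 ≤ y i j ≤ 1 for all j ∈ R i, and α i j > 0 for all j ∈ R i. Suppose for all i and j ∈ R i: y i j + y j i ≤ 2·x i, and for all i: ∑_{j ∈ R i} α i j · (x j - y i j) ≤ (∑_{j ∈ R i} α i j) · (1 - x i). Then y i j = x i · x j for all i and j ∈ R i. -/
theorem PK_alpha_valid (n : ℕ) (R : Fin n → Finset (Fin n))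
    (hsym : ∀ i j, j ∈ R i ↔ i ∈ R j) (hirr : ∀ i, i ∉ R i)
    (x : Fin n → ℝ) (hx : ∀ i, x i = 0 ∨ x i = 1)
    (y : Fin n → Fin n → ℝ) (hy : ∀ i, ∀ j ∈ R i, 0 ≤ y i j ∧ y i j ≤ 1)
    (α : Fin n → Fin n → ℝ) (hα : ∀ i, ∀ j ∈ R i, 0 < α i j)
    (h2 : ∀ i, ∀ j ∈ R i, y i j + y j i ≤ 2 * x i)
    (h1 : ∀ i, ∑ j ∈ R i, α i j * (x j - y i j) ≤ (∑ j ∈ R i, α i j) * (1 - x i)) :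
    ∀ i, ∀ j ∈ R i, y i j = x i * x j := by
  -- Key lemma: if x i = 0 then y i j = 0 for j ∈ R i
  have key : ∀ i, x i = 0 → ∀ j ∈ R i, y i j = 0 ∧ y j i = 0 := by
    intro i hi j hj
    have hji : i ∈ R j := (hsym i j).mp hj
    have h := h2 i j hj
    rw [hi] at h
    have h1' := (hy i j hj).1
    have h2' := (hy j i hji).1
    constructor <;> linarith
  intro i j hj
  rcases hx i with hi | hi
  · rw [hi, zero_mul]
    exact (key i hi j hj).1
  · -- x i = 1
    have hsum := h1 i
    rw [hi] at hsum
    simp only [sub_self, mul_zero] at hsum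
    have hnn : ∀ k ∈ R i, 0 ≤ α i k * (x k - y i k) := by
      intro k hk
      rcases hx k with hk0 | hk1
      · have : y i k = 0 := (key k hk0 i ((hsym i k).mp hk)).2
        rw [hk0, this]
        simp
      · have := (hy i k hk).2
        have := (hα i k hk).le
        nlinarith
    have hzero : ∀ k ∈ R i, α i k * (x k - y i k) = 0 := by
      intro k hk
      by_contra hne
      have hpos : 0 < α i k * (x k - y i k) := lt_of_le_of_ne (hnn k hk) (Ne.symm hne)
      have : 0 < ∑ k ∈ R i, α i k * (x k - y i k) :=
        Finset.sum_pos' hnn ⟨k, hk, hpos⟩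
      linarith
    have := hzero j hj
    have hαp := hα i j hj
    have : x j - y i j = 0 := by
      rcases mul_eq_zero.mp this with h | h
      · exact absurd h hαp.ne'
      · exact h
    rw [hi, one_mul]
    linarith
end

section
/- Let n ∈ ℕ, R : Fin n → Finset (Fin n) symmetric with i ∉ R i, x : Fin n → {0,1} binary, y : Fin n → Fin n → ℝ with 0 ≤ y i j ≤ 1 for j ∈ R i, and β i j > 0 for j ∈ R i. Suppose for all i and j ∈ R i: x i + x j - y i j ≤ 1, and for all i: ∑_{j ∈ R i} β i j · (y i j + y j i) ≤ 2·(∑_{j ∈ R i} β i j)·x i. Then y i j = x i · x j for all i and j ∈ R i. -/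
theorem PK_star_beta_valid (n : ℕ) (R : Fin n → Finset (Fin n))
    (hsym : ∀ i j, j ∈ R i ↔ i ∈ R j) (hirr : ∀ i, i ∉ R i)
    (x : Fin n → ℝ) (hx : ∀ i, x i = 0 ∨ x i = 1)
    (y : Fin n → Fin n → ℝ) (hy : ∀ i, ∀ j ∈ R i, 0 ≤ y i j ∧ y i j ≤ 1)
    (β : Fin n → Fin n → ℝ) (hβ : ∀ i, ∀ j ∈ R i, 0 < β i j)
    (h1 : ∀ i, ∀ j ∈ R i, x i + x j - y i j ≤ 1)
    (h2 : ∀ i, ∑ j ∈ R i, β i j * (y i j + y j i) ≤ 2 * (∑ j ∈ R i, β i j) * x i) :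
    ∀ i, ∀ j ∈ R i, y i j = x i * x j := by
  have key : ∀ i, x i = 0 → ∀ j ∈ R i, y i j = 0 ∧ y j i = 0 := by
    intro i hxi j hj
    have h := h2 i
    rw [hxi, mul_zero] at h
    have hnn : ∀ k ∈ R i, 0 ≤ β i k * (y i k + y k i) := by
      intro k hk
      exact mul_nonneg (le_of_lt (hβ i k hk))
        (add_nonneg (hy i k hk).1 (hy k i ((hsym i k).mp hk)).1)
    have hz := (Finset.sum_eq_zero_iff_of_nonneg hnn).mp
      (le_antisymm h (Finset.sum_nonneg hnn)) j hj
    have hsum : y i j + y j i = 0 := by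
      rcases mul_eq_zero.mp hz with h' | h'
      · exact absurd h' (ne_of_gt (hβ i j hj))
      · exact h'
    have h1' := (hy i j hj).1
    have h2' := (hy j i ((hsym i j).mp hj)).1
    constructor <;> linarith
  intro i j hj
  rcases hx i with hxi | hxi
  · rw [hxi, zero_mul]; exact (key i hxi j hj).1
  · rcases hx j with hxj | hxj
    · rw [hxj, mul_zero]; exact (key j hxj i ((hsym i j).mp hj)).2
    · have := h1 i j hj
      have := (hy i j hj).2
      rw [hxi, hxj, one_mul]
      linarith
end

section
/- Let n ∈ ℕ, R : Fin n → Finset (Fin n) symmetric with i ∉ R i, x : Fin n → {0,1} binary, y : Fin n → Fin n → ℝ with 0 ≤ y i j ≤ 1 for j ∈ R i, and γ i j > 0 for j ∈ R i. Suppose for all i and j ∈ R i: x i + x j - y i j ≤ 1 and y i j ≤ y j i, and for all i: ∑_{j ∈ R i} γ i j · y i j ≤ (∑_{j ∈ R i} γ i j)·x i. Then y i j = x i · x j for all i and j ∈ R i. -/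
theorem FT_star_gamma_valid (n : ℕ) (R : Fin n → Finset (Fin n))
    (hsym : ∀ i j, j ∈ R i ↔ i ∈ R j) (hirr : ∀ i, i ∉ R i)
    (x : Fin n → ℝ) (hx : ∀ i, x i = 0 ∨ x i = 1)
    (y : Fin n → Fin n → ℝ) (hy : ∀ i, ∀ j ∈ R i, 0 ≤ y i j ∧ y i j ≤ 1)
    (γ : Fin n → Fin n → ℝ) (hγ : ∀ i, ∀ j ∈ R i, 0 < γ i j)
    (h1 : ∀ i, ∀ j ∈ R i, x i + x j - y i j ≤ 1)
    (h3 : ∀ i, ∀ j ∈ R i, y i j ≤ y j i)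
    (h2 : ∀ i, ∑ j ∈ R i, γ i j * y i j ≤ (∑ j ∈ R i, γ i j) * x i) :
    ∀ i, ∀ j ∈ R i, y i j = x i * x j := by
  have key : ∀ i, x i = 0 → ∀ j ∈ R i, y i j = 0 := by
    intro i hxi j hj
    have hle : ∑ k ∈ R i, γ i k * y i k ≤ 0 := by
      have := h2 i
      rwa [hxi, mul_zero] at this
    have hnn : ∀ k ∈ R i, 0 ≤ γ i k * y i k := fun k hk =>
      mul_nonneg (hγ i k hk).le (hy i k hk).1
    have hz : ∀ k ∈ R i, γ i k * y i k = 0 := by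
      rw [← Finset.sum_eq_zero_iff_of_nonneg hnn]
      exact le_antisymm hle (Finset.sum_nonneg hnn)
    have := hz j hj
    rcases mul_eq_zero.mp this with h | h
    · exact absurd h (hγ i j hj).ne'
    · exact h
  intro i j hj
  have hji : i ∈ R j := (hsym i j).mp hj
  rcases hx i with hi | hi
  · rw [key i hi j hj, hi, zero_mul]
  · rcases hx j with hj' | hj'
    · have : y j i = 0 := key j hj' i hji
      have := le_antisymm (this ▸ h3 i j hj) (hy i j hj).1
      rw [this, hi, hj', mul_zero]
    · have h1' := h1 i j hj
      rw [hi, hj'] at h1'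
      have : (1:ℝ) ≤ y i j := by linarith
      rw [le_antisymm (hy i j hj).2 this, hi, hj', mul_one]
end

section
/- Let n ∈ ℕ, R : Fin n → Finset (Fin n) symmetric with i ∉ R i, x : Fin n → {0,1} binary, y : Fin n → Fin n → ℝ with 0 ≤ y i j ≤ 1 for j ∈ R i, and γ i j, δ i j > 0 for j ∈ R i. Suppose for all i and j ∈ R i: x i + x j - y i j ≤ 1, and for all i: ∑_{j ∈ R i} (γ i j · y i j + δ i j · y j i) ≤ (∑_{j ∈ R i} (γ i j + δ i j))·x i. Then y i j = x i · x j for all i and j ∈ R i. -/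
theorem GW_star_gamma_delta_valid (n : ℕ) (R : Fin n → Finset (Fin n))
    (hsym : ∀ i j, j ∈ R i ↔ i ∈ R j) (hirr : ∀ i, i ∉ R i)
    (x : Fin n → ℝ) (hx : ∀ i, x i = 0 ∨ x i = 1)
    (y : Fin n → Fin n → ℝ) (hy : ∀ i, ∀ j ∈ R i, 0 ≤ y i j ∧ y i j ≤ 1)
    (γ δ : Fin n → Fin n → ℝ)
    (hγ : ∀ i, ∀ j ∈ R i, 0 < γ i j) (hδ : ∀ i, ∀ j ∈ R i, 0 < δ i j)
    (h1 : ∀ i, ∀ j ∈ R i, x i + x j - y i j ≤ 1)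
    (h2 : ∀ i, ∑ j ∈ R i, (γ i j * y i j + δ i j * y j i) ≤
      (∑ j ∈ R i, (γ i j + δ i j)) * x i) :
    ∀ i, ∀ j ∈ R i, y i j = x i * x j := by
  have key : ∀ i, x i = 0 → ∀ j ∈ R i, y i j = 0 ∧ y j i = 0 := by
    intro i hxi
    have h := h2 i
    rw [hxi, mul_zero] at h
    have hterm : ∀ j ∈ R i, 0 ≤ γ i j * y i j + δ i j * y j i := by
      intro j hj
      have hy1 := (hy i j hj).1
      have hy2 := (hy j i ((hsym i j).mp hj)).1
      have hg := (hγ i j hj).le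
      have hd := (hδ i j hj).le
      exact add_nonneg (mul_nonneg hg hy1) (mul_nonneg hd hy2)
    have hz := (Finset.sum_eq_zero_iff_of_nonneg hterm).mp
      (le_antisymm h (Finset.sum_nonneg hterm))
    intro j hj
    have hzj := hz j hj
    have hg := hγ i j hj
    have hd := hδ i j hj
    have hy1 := (hy i j hj).1
    have hy2 := (hy j i ((hsym i j).mp hj)).1
    constructor
    · nlinarith [mul_nonneg hd.le hy2, mul_nonneg hg.le hy1]
    · nlinarith [mul_nonneg hd.le hy2, mul_nonneg hg.le hy1]
  intro i j hj
  rcases hx i with h0 | h1i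
  · rw [h0, zero_mul]; exact (key i h0 j hj).1
  rcases hx j with h0 | h1j
  · rw [h0, mul_zero]; exact (key j h0 i ((hsym i j).mp hj)).2
  · have hle := (hy i j hj).2
    have hge := h1 i j hj
    rw [h1i, h1j]
    linarith
end

section
/- Let n ∈ ℕ, R : Fin n → Finset (Fin n) symmetric with i ∉ R i, x : Fin n → {0,1} binary, y : Fin n → Fin n → ℝ with 0 ≤ y i j ≤ 1 for j ∈ R i, and positive weights α, γ, δ (indexed by i and j ∈ R i). Suppose for all i: ∑_{j ∈ R i} α i j · (x j - y i j) ≤ (∑_{j ∈ R i} α i j)·(1 - x i) and ∑_{j ∈ R i} (γ i j · y i j + δ i j · y j i) ≤ (∑_{j ∈ R i} (γ i j + δ i j))·x i. Then y i j = x i · x j for all i and j ∈ R i. -/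
theorem GW_alpha_gamma_delta_valid (n : ℕ) (R : Fin n → Finset (Fin n))
    (hsym : ∀ i j, j ∈ R i ↔ i ∈ R j) (hirr : ∀ i, i ∉ R i)
    (x : Fin n → ℝ) (hx : ∀ i, x i = 0 ∨ x i = 1)
    (y : Fin n → Fin n → ℝ) (hy : ∀ i, ∀ j ∈ R i, 0 ≤ y i j ∧ y i j ≤ 1)
    (α γ δ : Fin n → Fin n → ℝ)
    (hα : ∀ i, ∀ j ∈ R i, 0 < α i j)
    (hγ : ∀ i, ∀ j ∈ R i, 0 < γ i j) (hδ : ∀ i, ∀ j ∈ R i, 0 < δ i j)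
    (h1 : ∀ i, ∑ j ∈ R i, α i j * (x j - y i j) ≤ (∑ j ∈ R i, α i j) * (1 - x i))
    (h2 : ∀ i, ∑ j ∈ R i, (γ i j * y i j + δ i j * y j i) ≤
      (∑ j ∈ R i, (γ i j + δ i j)) * x i) :
    ∀ i, ∀ j ∈ R i, y i j = x i * x j := by
  -- Key lemma: if x j = 0 then y j k = 0 and y k j = 0 for all k ∈ R j
  have key : ∀ j, x j = 0 → ∀ k ∈ R j, y j k = 0 ∧ y k j = 0 := by
    intro j hj k hk
    have h2j := h2 j
    rw [hj, mul_zero] at h2j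
    have hnn : ∀ k ∈ R j, 0 ≤ γ j k * y j k + δ j k * y k j := by
      intro k hk
      have h1 := mul_nonneg (hγ j k hk).le (hy j k hk).1
      have h2 := mul_nonneg (hδ j k hk).le (hy k j ((hsym j k).mp hk)).1
      linarith
    have hz : ∀ k ∈ R j, γ j k * y j k + δ j k * y k j = 0 :=
      (Finset.sum_eq_zero_iff_of_nonneg hnn).mp
        (le_antisymm h2j (Finset.sum_nonneg hnn))
    have := hz k hk
    have hy1 := mul_nonneg (hγ j k hk).le (hy j k hk).1
    have hy2 := mul_nonneg (hδ j k hk).le (hy k j ((hsym j k).mp hk)).1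
    constructor
    · have : γ j k * y j k = 0 := by linarith
      exact (mul_eq_zero.mp this).resolve_left (ne_of_gt (hγ j k hk))
    · have : δ j k * y k j = 0 := by linarith
      exact (mul_eq_zero.mp this).resolve_left (ne_of_gt (hδ j k hk))
  intro i j hj
  rcases hx i with hi0 | hi1
  · rw [hi0, zero_mul]
    exact (key i hi0 j hj).1
  · rcases hx j with hj0 | hj1
    · rw [hj0, mul_zero]
      exact (key j hj0 i ((hsym i j).mp hj)).2
    · rw [hi1, hj1, one_mul]
      have h1i := h1 i
      rw [hi1] at h1i
      simp only [sub_self, mul_zero] at h1i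
      have hnn : ∀ k ∈ R i, 0 ≤ α i k * (x k - y i k) := by
        intro k hk
        rcases hx k with hk0 | hk1
        · have : y i k = 0 := (key k hk0 i ((hsym i k).mp hk)).2
          rw [hk0, this]
          simp
        · have := (hy i k hk).2
          have := (hα i k hk).le
          nlinarith
      have hall := (Finset.sum_eq_zero_iff_of_nonneg hnn).mp
        (le_antisymm h1i (Finset.sum_nonneg hnn))
      have := hall j hj
      have hα' := hα i j hj
      have : x j - y i j = 0 := by
        rcases mul_eq_zero.mp this with h | h
        · exact absurd h (ne_of_gt hα')
        · exact h
      rw [hj1] at this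
      linarith
end

section
/- Let n ∈ ℕ, R : Fin n → Finset (Fin n) symmetric with i ∉ R i, x : Fin n → {0,1} binary, y : Fin n → Fin n → ℝ with 0 ≤ y i j ≤ 1 for j ∈ R i, and positive weights α, γ. Suppose for all i: ∑_{j ∈ R i} α i j · (x j - y i j) ≤ (∑_{j ∈ R i} α i j)·(1 - x i) and ∑_{j ∈ R i} γ i j · y i j ≤ (∑_{j ∈ R i} γ i j)·x i, and for all i and j ∈ R i: y i j ≤ y j i. Then y i j = x i · x j for all i and j ∈ R i. -/
theorem FT_alpha_gamma_valid (n : ℕ) (R : Fin n → Finset (Fin n))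
    (hsym : ∀ i j, j ∈ R i ↔ i ∈ R j) (hirr : ∀ i, i ∉ R i)
    (x : Fin n → ℝ) (hx : ∀ i, x i = 0 ∨ x i = 1)
    (y : Fin n → Fin n → ℝ) (hy : ∀ i, ∀ j ∈ R i, 0 ≤ y i j ∧ y i j ≤ 1)
    (α γ : Fin n → Fin n → ℝ)
    (hα : ∀ i, ∀ j ∈ R i, 0 < α i j) (hγ : ∀ i, ∀ j ∈ R i, 0 < γ i j)
    (h1 : ∀ i, ∑ j ∈ R i, α i j * (x j - y i j) ≤ (∑ j ∈ R i, α i j) * (1 - x i))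
    (h2 : ∀ i, ∑ j ∈ R i, γ i j * y i j ≤ (∑ j ∈ R i, γ i j) * x i)
    (h3 : ∀ i, ∀ j ∈ R i, y i j ≤ y j i) :
    ∀ i, ∀ j ∈ R i, y i j = x i * x j := by
  -- Step A: if x i = 0 then y i j = 0 for all j ∈ R i
  have hA : ∀ i, x i = 0 → ∀ j ∈ R i, y i j = 0 := by
    intro i hxi j hj
    have hle := h2 i
    rw [hxi, mul_zero] at hle
    have hnn : ∀ k ∈ R i, 0 ≤ γ i k * y i k := fun k hk =>
      mul_nonneg (hγ i k hk).le (hy i k hk).1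
    have hsum0 : ∑ k ∈ R i, γ i k * y i k = 0 :=
      le_antisymm hle (Finset.sum_nonneg hnn)
    have := (Finset.sum_eq_zero_iff_of_nonneg hnn).1 hsum0 j hj
    have hγpos := hγ i j hj
    nlinarith [(hy i j hj).1]
  -- Step B: if x j = 0 then y i j = 0 for j ∈ R i
  have hB : ∀ i, ∀ j ∈ R i, x j = 0 → y i j = 0 := by
    intro i j hj hxj
    have hji : y j i = 0 := hA j hxj i ((hsym i j).1 hj)
    have := h3 i j hj
    have := (hy i j hj).1
    linarith
  intro i j hj
  rcases hx i with hxi | hxi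
  · rw [hxi, zero_mul]; exact hA i hxi j hj
  · rcases hx j with hxj | hxj
    · rw [hxi, hxj, one_mul]; exact hB i j hj hxj
    · -- x i = 1, x j = 1: use h1
      have hle := h1 i
      rw [hxi] at hle
      simp only [sub_self, mul_zero] at hle
      have hnn : ∀ k ∈ R i, 0 ≤ α i k * (x k - y i k) := by
        intro k hk
        rcases hx k with hxk | hxk
        · have : y i k = 0 := hB i k hk hxk
          rw [hxk, this]; simp
        · have := (hy i k hk).2
          have := (hα i k hk).le
          nlinarith
      have hsum0 : ∑ k ∈ R i, α i k * (x k - y i k) = 0 :=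
        le_antisymm hle (Finset.sum_nonneg hnn)
      have hz := (Finset.sum_eq_zero_iff_of_nonneg hnn).1 hsum0 j hj
      have hαpos := hα i j hj
      rw [hxi, hxj, one_mul]
      nlinarith
end

section
/- There exist binary x : Fin 3 → {0,1} and binary y : Fin 3 → Fin 3 → {0,1} satisfying, with R_i the off-diagonal support of Q = [[0,1,1],[1,0,0],[1,0,0]], the type 1 constraints x_i + x_j - y_ij ≤ 1 for all j ∈ R_i and the unit-weight aggregated type 2 constraints ∑_{j∈R_i} (2 y_ij - x_j) ≤ |R_i| x_i, but for which y_ij ≠ x_i x_j for some pair; moreover such a solution achieves objective value ∑ q_ij y_ij + ∑ c_i x_i strictly exceeding the maximum of x^T Q x + c^T x over binary x, for c = (1,-5,-5). -/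
theorem DW_star_beta_invalid :
    ∃ (x : Fin 3 → ℝ) (y : Fin 3 → Fin 3 → ℝ),
      let Q : Fin 3 → Fin 3 → ℝ := ![![0,1,1],![1,0,0],![1,0,0]]
      let c : Fin 3 → ℝ := ![1,-5,-5]
      let R : Fin 3 → Finset (Fin 3) := fun i => Finset.univ.filter (fun j => Q i j ≠ 0)
      (∀ i, x i = 0 ∨ x i = 1) ∧
      (∀ i j, y i j = 0 ∨ y i j = 1) ∧
      (∀ i, ∀ j ∈ R i, x i + x j - y i j ≤ 1) ∧
      (∀ i, ∑ j ∈ R i, (2 * y i j - x j) ≤ ((R i).card : ℝ) * x i) ∧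
      (∃ i, ∃ j ∈ R i, y i j ≠ x i * x j) ∧
      (∀ x' : Fin 3 → ℝ, (∀ i, x' i = 0 ∨ x' i = 1) →
        (∑ i, ∑ j, Q i j * x' i * x' j) + ∑ i, c i * x' i <
          (∑ i, ∑ j ∈ R i, Q i j * y i j) + ∑ i, c i * x i) := by
  refine ⟨fun i => if i = 0 then 1 else 0,
    fun i j => if i = 0 ∧ j = 1 then 1 else 0, ?_⟩
  intro Q c R
  have q00 : Q 0 0 = 0 := rfl
  have q01 : Q 0 1 = 1 := rfl
  have q02 : Q 0 2 = 1 := rfl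
  have q10 : Q 1 0 = 1 := rfl
  have q11 : Q 1 1 = 0 := rfl
  have q12 : Q 1 2 = 0 := rfl
  have q20 : Q 2 0 = 1 := rfl
  have q21 : Q 2 1 = 0 := rfl
  have q22 : Q 2 2 = 0 := rfl
  have c0 : c 0 = 1 := rfl
  have c1 : c 1 = -5 := rfl
  have c2 : c 2 = -5 := rfl
  have hR0 : R 0 = {1, 2} := by
    ext j; fin_cases j <;> simp [R, q00, q01, q02]
  have hR1 : R 1 = {0} := by
    ext j; fin_cases j <;> simp [R, q10, q11, q12]
  have hR2 : R 2 = {0} := by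
    ext j; fin_cases j <;> simp [R, q20, q21, q22]
  have e12 : (1 : Fin 3) ≠ 2 := by decide
  have e10 : ¬((1 : Fin 3) = 0) := by decide
  have e20 : ¬((2 : Fin 3) = 0) := by decide
  have e21 : ¬((2 : Fin 3) = 1) := by decide
  have hsum12 : ∀ f : Fin 3 → ℝ, ∑ j ∈ ({1, 2} : Finset (Fin 3)), f j = f 1 + f 2 := by
    intro f; rw [Finset.sum_pair e12]
  refine ⟨?_, ?_, ?_, ?_, ?_, ?_⟩
  · intro i
    by_cases h : i = 0 <;> simp [h]
  · intro i j
    by_cases h : i = 0 ∧ j = 1 <;> simp [h]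
  · intro i j hj
    by_cases hi : i = 0
    · subst hi
      rw [hR0] at hj
      simp only [Finset.mem_insert, Finset.mem_singleton] at hj
      rcases hj with h | h <;> subst h <;> simp [e10, e20, e21]
    · simp only [if_neg hi]
      have : ¬(i = 0 ∧ j = 1) := fun h => hi h.1
      rw [if_neg this]
      by_cases hj0 : j = 0 <;> simp [hj0]
  · intro i
    by_cases hi : i = 0
    · subst hi
      rw [hR0, hsum12]
      simp [e10, e20, e21, Finset.card_insert_of_notMem, e12]
    · have hRi : R i = {0} := by
        fin_cases i
        · exact absurd rfl hi
        · exact hR1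
        · exact hR2
      rw [hRi]
      have : ¬(i = 0 ∧ (0 : Fin 3) = 1) := fun h => hi h.1
      simp [this, hi]
  · refine ⟨0, 1, ?_, ?_⟩
    · rw [hR0]; simp
    · norm_num
  · intro x' hx'
    have h0 := hx' 0
    have h1 := hx' 1
    have h2 := hx' 2
    have hlhs : (∑ i, ∑ j, Q i j * x' i * x' j) =
        2 * x' 0 * x' 1 + 2 * x' 0 * x' 2 := by
      simp only [Fin.sum_univ_three, q00, q01, q02, q10, q11, q12, q20, q21, q22]
      ring
    have hrhs : (∑ i, ∑ j ∈ R i, Q i j *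
          (if i = 0 ∧ j = 1 then (1 : ℝ) else 0)) = 1 := by
      simp only [Fin.sum_univ_three, hR0, hR1, hR2, hsum12, Finset.sum_singleton,
        q01, q02, q10, q20]
      norm_num [e20, e21]
    have hx0 : (∑ i, c i * (if i = 0 then (1 : ℝ) else 0)) = 1 := by
      simp only [Fin.sum_univ_three, c0, c1, c2]
      norm_num [e10, e20]
    rw [hlhs, hrhs, hx0]
    have hc : (∑ i, c i * x' i) = x' 0 - 5 * x' 1 - 5 * x' 2 := by
      simp only [Fin.sum_univ_three, c0, c1, c2]; ring
    rw [hc]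
    rcases h0 with h0 | h0 <;> rcases h1 with h1 | h1 <;> rcases h2 with h2 | h2 <;>
      rw [h0, h1, h2] <;> norm_num
end

section
/- Consider the QUBO instance with n = 2, Q = [[0,α],[α,0]] for α > 0, and c = (0,0). The point x_1 = x_2 = 1, y_12 = y_21 = 0 is feasible for the optimality-restricted model ORDW (which for q_12 > 0 imposes only 2y_12 ≤ x_1 + x_2 and 2y_21 ≤ x_1 + x_2 with y binary), has ORDW objective value 0, but the true quadratic objective x^T Q x equals 2α; hence the gap between the ORDW objective of a feasible point and its true QUBO value can be arbitrarily large. -/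
theorem ORDW_gap_arbitrarily_large (α : ℝ) (hα : 0 < α) :
    ∃ (x : Fin 2 → ℝ) (y : Fin 2 → Fin 2 → ℝ),
      let Q : Fin 2 → Fin 2 → ℝ := ![![0,α],![α,0]]
      (∀ i, x i = 0 ∨ x i = 1) ∧
      (∀ i j, y i j = 0 ∨ y i j = 1) ∧
      (∀ i j, 0 < Q i j → 2 * y i j ≤ x i + x j) ∧
      (∑ i, ∑ j, Q i j * y i j = 0) ∧
      (∑ i, ∑ j, Q i j * x i * x j = 2 * α) := by
  refine ⟨fun _ => 1, fun _ _ => 0, ?_, ?_, ?_, ?_, ?_⟩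
  · intro i; right; rfl
  · intro i j; left; rfl
  · intro i j _; norm_num
  · simp [Fin.sum_univ_two]
  · simp [Fin.sum_univ_two]; ring
end

section
/- Let Q be a symmetric n×n real matrix with zero diagonal and c ∈ ℝ^n. Then the optimal value of the LP relaxation of the Glover–Woolsey linearization equals the optimal value of the LP relaxation of the Fortet linearization. The GW relaxation maximizes ∑_{j∈R_i, i} q_ij y_ij + ∑ c_i x_i over 0 ≤ x ≤ 1, y ≥ 0 with x_i + x_j - y_ij ≤ 1, y_ij ≤ x_i, y_ji ≤ x_i; the FT relaxation has instead y_ij ≤ x_i and y_ij ≤ y_ji in place of y_ji ≤ x_i. -/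
theorem GW_LP_eq_FT_LP (n : ℕ) (Q : Matrix (Fin n) (Fin n) ℝ) (c : Fin n → ℝ)
    (hsym : ∀ i j, Q i j = Q j i) (hdiag : ∀ i, Q i i = 0) :
    sSup {v : ℝ | ∃ (x : Fin n → ℝ) (y : Fin n → Fin n → ℝ),
      (∀ i, 0 ≤ x i ∧ x i ≤ 1) ∧ (∀ i j, 0 ≤ y i j) ∧
      (∀ i j, Q i j ≠ 0 →
        x i + x j - y i j ≤ 1 ∧ y i j ≤ x i ∧ y j i ≤ x i) ∧
      v = (∑ i, ∑ j, Q i j * y i j) + ∑ i, c i * x i} =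
    sSup {v : ℝ | ∃ (x : Fin n → ℝ) (y : Fin n → Fin n → ℝ),
      (∀ i, 0 ≤ x i ∧ x i ≤ 1) ∧ (∀ i j, 0 ≤ y i j) ∧
      (∀ i j, Q i j ≠ 0 →
        x i + x j - y i j ≤ 1 ∧ y i j ≤ x i ∧ y i j ≤ y j i) ∧
      v = (∑ i, ∑ j, Q i j * y i j) + ∑ i, c i * x i} := by
  congr 1
  ext v
  constructor
  · rintro ⟨x, y, hx, hy, hc, hv⟩
    refine ⟨x, fun i j => (y i j + y j i) / 2, hx, ?_, ?_, ?_⟩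
    · intro i j
      have h1 := hy i j
      have h2 := hy j i
      positivity
    · intro i j hq
      have hq' : Q j i ≠ 0 := fun h => hq ((hsym i j).trans h)
      obtain ⟨a1, a2, a3⟩ := hc i j hq
      obtain ⟨b1, b2, b3⟩ := hc j i hq'
      refine ⟨by dsimp; linarith, by dsimp; linarith, ?_⟩
      dsimp
      linarith
    · rw [hv]
      have hswap : ∑ i, ∑ j, Q i j * y j i = ∑ i, ∑ j, Q i j * y i j := by
        rw [Finset.sum_comm]
        exact Finset.sum_congr rfl fun i _ => Finset.sum_congr rfl fun j _ => by
          rw [hsym]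
      have : ∑ i, ∑ j, Q i j * ((y i j + y j i) / 2)
          = (∑ i, ∑ j, Q i j * y i j) / 2 + (∑ i, ∑ j, Q i j * y j i) / 2 := by
        rw [Finset.sum_div, Finset.sum_div, ← Finset.sum_add_distrib]
        refine Finset.sum_congr rfl fun i _ => ?_
        rw [Finset.sum_div, Finset.sum_div, ← Finset.sum_add_distrib]
        exact Finset.sum_congr rfl fun j _ => by ring
      rw [this, hswap]
      ring
  · rintro ⟨x, y, hx, hy, hc, hv⟩
    refine ⟨x, y, hx, hy, ?_, hv⟩
    intro i j hq
    have hq' : Q j i ≠ 0 := fun h => hq ((hsym i j).trans h)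
    obtain ⟨a1, a2, a3⟩ := hc i j hq
    obtain ⟨b1, b2, b3⟩ := hc j i hq'
    exact ⟨a1, a2, le_trans b3 a2⟩
end

section
/- Let Q be a symmetric n×n real matrix with zero diagonal and c ∈ ℝ^n. The optimal value of the LP relaxation of the Glover–Woolsey linearization equals the optimal value of the LP relaxation of the PK linearization: max over {x ∈ [0,1]^n, y ≥ 0 : x_i + x_j - y_ij ≤ 1, y_ij ≤ x_i, y_ji ≤ x_i} of ∑ q_ij y_ij + c^T x equals max over {x ∈ [0,1]^n, y ≥ 0 : x_i + x_j - y_ij ≤ 1, y_ij + y_ji ≤ 2x_i} of the same objective. -/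
theorem GW_LP_eq_PK_LP (n : ℕ) (Q : Matrix (Fin n) (Fin n) ℝ) (c : Fin n → ℝ)
    (hsym : ∀ i j, Q i j = Q j i) (hdiag : ∀ i, Q i i = 0) :
    sSup {v : ℝ | ∃ (x : Fin n → ℝ) (y : Fin n → Fin n → ℝ),
      (∀ i, 0 ≤ x i ∧ x i ≤ 1) ∧ (∀ i j, 0 ≤ y i j) ∧
      (∀ i j, Q i j ≠ 0 →
        x i + x j - y i j ≤ 1 ∧ y i j ≤ x i ∧ y j i ≤ x i) ∧
      v = (∑ i, ∑ j, Q i j * y i j) + ∑ i, c i * x i} =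
    sSup {v : ℝ | ∃ (x : Fin n → ℝ) (y : Fin n → Fin n → ℝ),
      (∀ i, 0 ≤ x i ∧ x i ≤ 1) ∧ (∀ i j, 0 ≤ y i j) ∧
      (∀ i j, Q i j ≠ 0 →
        x i + x j - y i j ≤ 1 ∧ y i j + y j i ≤ 2 * x i) ∧
      v = (∑ i, ∑ j, Q i j * y i j) + ∑ i, c i * x i} := by
  congr 1
  ext v
  constructor
  · rintro ⟨x, y, hx, hy, hc, hv⟩
    exact ⟨x, y, hx, hy, fun i j hq => ⟨(hc i j hq).1,
      by have h := hc i j hq; linarith [h.2.1, h.2.2]⟩, hv⟩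
  · rintro ⟨x, y, hx, hy, hc, hv⟩
    refine ⟨x, fun i j => (y i j + y j i) / 2, hx,
      fun i j => by have := hy i j; have := hy j i; positivity, ?_, ?_⟩
    · intro i j hq
      have hq' : Q j i ≠ 0 := by rw [← hsym i j]; exact hq
      have h1 := hc i j hq
      have h2 := hc j i hq'
      refine ⟨by linarith [h1.1, h2.1], by linarith [h1.2], by linarith [h1.2]⟩
    · rw [hv]
      congr 1
      have key : ∑ i, ∑ j, Q i j * y j i = ∑ i, ∑ j, Q i j * y i j := by
        rw [Finset.sum_comm]
        exact Finset.sum_congr rfl fun j _ => Finset.sum_congr rfl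
          fun i _ => by rw [hsym]
      have expand : ∀ i j : Fin n, Q i j * ((y i j + y j i) / 2)
          = (Q i j * y i j) / 2 + (Q i j * y j i) / 2 := fun i j => by ring
      simp_rw [expand, Finset.sum_add_distrib, ← Finset.sum_div, key]
      ring
end
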